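/- arXiv:0812.2349 — 2 statements merged into one kernel-verified Lean document; each statement's English description precedes it below -/
import Mathlib

section
/- Fix $\rho>0$. There is a constant $C>0$ (depending only on $\rho$) such that for every $v \in C_c^\infty((\rho,\infty))$, $\|v\|_{L^4(r\,dr)} \le C\big(\|v\|_{L^2(r\,dr)} + \|v\|_{L^2(r\,dr)}^{3/4}\,\|v'\|_{L^2(r\,dr)}^{1/4}\big)$, where $\|g\|_{L^p(r\,dr)}^p = \int_\rho^\infty |g(r)|^p\, r\,dr$. -/
open MeasureTheory Set

/-- weighted Gagliardo–Nirenberg-type inequality on the half-line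
`(ρ,∞)` with the measure `r dr`:
`‖v‖_{L⁴(rdr)} ≤ C (‖v‖_{L²(rdr)} + ‖v‖_{L²(rdr)}^{3/4} ‖v'‖_{L²(rdr)}^{1/4})`. -/
theorem stmt_11 (ρ : ℝ) (hρ : 0 < ρ) :
    ∃ C > 0, ∀ v : ℝ → ℝ,
      ContDiff ℝ (⊤ : ℕ∞) v → HasCompactSupport v → Function.support v ⊆ Ioi ρ →
      (∫ r in Ioi ρ, v r ^ 4 * r) ^ ((1:ℝ)/4) ≤
        C * (Real.sqrt (∫ r in Ioi ρ, v r ^ 2 * r) +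
          Real.sqrt (∫ r in Ioi ρ, v r ^ 2 * r) ^ ((3:ℝ)/4) *
            Real.sqrt (∫ r in Ioi ρ, deriv v r ^ 2 * r) ^ ((1:ℝ)/4)) := by
  have h2ρ : (0:ℝ) < 2 / ρ := by positivity
  refine ⟨(2/ρ) ^ ((1:ℝ)/4), Real.rpow_pos_of_pos h2ρ _, ?_⟩
  intro v hv hcs hsupp
  have hvc : Continuous v := hv.continuous
  have hvd : Differentiable ℝ v := hv.differentiable (by simp)
  have hv'c : Continuous (deriv v) := hv.continuous_deriv (by simp)
  have hcs' : HasCompactSupport (deriv v) := hcs.deriv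
  -- generic compact support helper
  have hCS : ∀ (f g : ℝ → ℝ), HasCompactSupport f → (∀ x, f x = 0 → g x = 0) →
      HasCompactSupport g := by
    intro f g hf h
    exact hf.mono' (fun x hx => subset_tsupport f (fun h0 => hx (h x h0)))
  -- generic integrability helper
  have hInt : ∀ f : ℝ → ℝ, Continuous f → HasCompactSupport f →
      IntegrableOn f (Ioi ρ) := fun f hf hfc =>
    (hf.integrable_of_hasCompactSupport hfc).integrableOn
  -- integrability of all relevant functions
  have hi_w2 : IntegrableOn (fun x => v x ^ 2 * x) (Ioi ρ) :=
    hInt _ ((hvc.pow 2).mul continuous_id) (hCS v _ hcs (fun x hx => by simp [hx]))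
  have hi_w4 : IntegrableOn (fun x => v x ^ 4 * x) (Ioi ρ) :=
    hInt _ ((hvc.pow 4).mul continuous_id) (hCS v _ hcs (fun x hx => by simp [hx]))
  have hi_w2' : IntegrableOn (fun x => deriv v x ^ 2 * x) (Ioi ρ) :=
    hInt _ ((hv'c.pow 2).mul continuous_id) (hCS (deriv v) _ hcs' (fun x hx => by simp [hx]))
  have hi_sq : IntegrableOn (fun x => v x ^ 2) (Ioi ρ) :=
    hInt _ (hvc.pow 2) (hCS v _ hcs (fun x hx => by simp [hx]))
  have hi_sq' : IntegrableOn (fun x => deriv v x ^ 2) (Ioi ρ) :=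
    hInt _ (hv'c.pow 2) (hCS (deriv v) _ hcs' (fun x hx => by simp [hx]))
  have hi_ab : IntegrableOn (fun x => 2 * |v x| * |deriv v x|) (Ioi ρ) :=
    hInt _ ((continuous_const.mul hvc.abs).mul hv'c.abs) (hCS v _ hcs (fun x hx => by simp [hx]))
  -- notation
  set I2 : ℝ := ∫ r in Ioi ρ, v r ^ 2 * r with hI2def
  set J2 : ℝ := ∫ r in Ioi ρ, deriv v r ^ 2 * r with hJ2def
  set I4 : ℝ := ∫ r in Ioi ρ, v r ^ 4 * r with hI4def
  set K : ℝ := ∫ x in Ioi ρ, 2 * |v x| * |deriv v x| with hKdef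
  set A : ℝ := Real.sqrt I2 with hAdef
  set B : ℝ := Real.sqrt J2 with hBdef
  have hI2 : 0 ≤ I2 := setIntegral_nonneg measurableSet_Ioi
    (fun x hx => mul_nonneg (sq_nonneg _) (le_of_lt (lt_trans hρ hx)))
  have hJ2 : 0 ≤ J2 := setIntegral_nonneg measurableSet_Ioi
    (fun x hx => mul_nonneg (sq_nonneg _) (le_of_lt (lt_trans hρ hx)))
  have hI4 : 0 ≤ I4 := setIntegral_nonneg measurableSet_Ioi
    (fun x hx => mul_nonneg (by positivity) (le_of_lt (lt_trans hρ hx)))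
  have hA : 0 ≤ A := Real.sqrt_nonneg _
  have hB : 0 ≤ B := Real.sqrt_nonneg _
  have hvρ : v ρ = 0 := by
    by_contra h
    exact absurd (hsupp h) (lt_irrefl ρ)
  -- Step 1: pointwise bound v r ^ 2 ≤ K on Ioi ρ
  have hK : ∀ r ∈ Ioi ρ, v r ^ 2 ≤ K := by
    intro r hr
    have hρr : ρ ≤ r := le_of_lt hr
    have hftc : ∫ x in ρ..r, 2 * v x * deriv v x = v r ^ 2 - v ρ ^ 2 :=
      intervalIntegral.integral_eq_sub_of_hasDerivAt
        (f := fun y => v y ^ 2) (f' := fun x => 2 * v x * deriv v x)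
        (fun x _ => by
          have := ((hvd x).hasDerivAt).pow 2
          norm_num at this
          exact HasDerivAt.congr_deriv this (by ring))
        (Continuous.intervalIntegrable ((continuous_const.mul hvc).mul hv'c) _ _)
    have h1 : v r ^ 2 = ∫ x in Ioc ρ r, 2 * v x * deriv v x := by
      rw [← intervalIntegral.integral_of_le hρr, hftc, hvρ]; ring
    have h2 : (∫ x in Ioc ρ r, 2 * v x * deriv v x) ≤
        ∫ x in Ioc ρ r, 2 * |v x| * |deriv v x| := by
      refine setIntegral_mono_on ?_ ?_ measurableSet_Ioc (fun x _ => ?_)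
      · exact (hInt _ ((continuous_const.mul hvc).mul hv'c)
          (hCS v _ hcs (fun x hx => by simp [hx]))).mono_set Ioc_subset_Ioi_self
      · exact hi_ab.mono_set Ioc_subset_Ioi_self
      · calc 2 * v x * deriv v x ≤ |2 * v x * deriv v x| := le_abs_self _
          _ = 2 * |v x| * |deriv v x| := by
              rw [abs_mul, abs_mul]; simp [abs_of_nonneg]
    have h3 : (∫ x in Ioc ρ r, 2 * |v x| * |deriv v x|) ≤ K := by
      refine setIntegral_mono_set hi_ab ?_ (HasSubset.Subset.eventuallyLE Ioc_subset_Ioi_self)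
      exact Filter.Eventually.of_forall (fun x => by positivity)
    rw [h1]; exact le_trans h2 h3
  -- Step 2: I4 ≤ K * I2
  have hstep2 : I4 ≤ K * I2 := by
    have : I4 ≤ ∫ x in Ioi ρ, K * (v x ^ 2 * x) := by
      refine setIntegral_mono_on hi_w4 (hi_w2.const_mul K) measurableSet_Ioi
        (fun x hx => ?_)
      have hx0 : (0:ℝ) ≤ x := le_of_lt (lt_trans hρ hx)
      have : v x ^ 4 * x = v x ^ 2 * (v x ^ 2 * x) := by ring
      rw [this]
      exact mul_le_mul_of_nonneg_right (hK x hx) (mul_nonneg (sq_nonneg _) hx0)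
    rwa [integral_const_mul] at this
  -- weighted bounds for the unweighted L² norms
  have hw : ∀ f : ℝ → ℝ, IntegrableOn (fun x => f x ^ 2) (Ioi ρ) →
      IntegrableOn (fun x => f x ^ 2 * x) (Ioi ρ) →
      (∫ x in Ioi ρ, f x ^ 2) ≤ ρ⁻¹ * ∫ x in Ioi ρ, f x ^ 2 * x := by
    intro f h1 h2
    have : (∫ x in Ioi ρ, f x ^ 2) ≤ ∫ x in Ioi ρ, ρ⁻¹ * (f x ^ 2 * x) := by
      refine setIntegral_mono_on h1 (h2.const_mul _) measurableSet_Ioi (fun x hx => ?_)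
      rw [inv_mul_eq_div, le_div_iff₀ hρ]
      nlinarith [sq_nonneg (f x), hx.out]
    rwa [integral_const_mul] at this
  -- Step 3 : K ≤ 2 ρ⁻¹ A B  via Cauchy–Schwarz
  have hCS2 : (∫ x in Ioi ρ, |v x| * |deriv v x|) ≤
      (∫ x in Ioi ρ, v x ^ 2) ^ ((1:ℝ)/2) * (∫ x in Ioi ρ, deriv v x ^ 2) ^ ((1:ℝ)/2) := by
    have hpq : Real.HolderConjugate 2 2 := ⟨by norm_num, by norm_num, by norm_num⟩
    have h2 : ENNReal.ofReal (2:ℝ) = 2 := by norm_num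
    have hm1 : MemLp (fun x => |v x|) (ENNReal.ofReal 2) (volume.restrict (Ioi ρ)) := by
      rw [h2, memLp_two_iff_integrable_sq (hvc.abs.aestronglyMeasurable)]
      simpa [sq_abs] using (show Integrable (fun x => v x ^ 2) (volume.restrict (Ioi ρ)) from hi_sq)
    have hm2 : MemLp (fun x => |deriv v x|) (ENNReal.ofReal 2)
        (volume.restrict (Ioi ρ)) := by
      rw [h2, memLp_two_iff_integrable_sq (hv'c.abs.aestronglyMeasurable)]
      simpa [sq_abs] using (show Integrable (fun x => deriv v x ^ 2) (volume.restrict (Ioi ρ)) from hi_sq')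
    have := MeasureTheory.integral_mul_le_Lp_mul_Lq_of_nonneg hpq
      (Filter.Eventually.of_forall (fun x => abs_nonneg (v x)))
      (Filter.Eventually.of_forall (fun x => abs_nonneg (deriv v x))) hm1 hm2
    have habs : ∀ a : ℝ, |a| ^ (2:ℝ) = a ^ 2 := fun a => by
      rw [show (2:ℝ) = ((2:ℕ):ℝ) by norm_num, Real.rpow_natCast, sq_abs]
    simpa [habs] using this
  have hstep3 : K ≤ 2 * ρ⁻¹ * A * B := by
    have hK2 : K = 2 * ∫ x in Ioi ρ, |v x| * |deriv v x| := by
      rw [hKdef, ← integral_const_mul]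
      congr 1; funext x; ring
    have hρinv : (0:ℝ) ≤ ρ⁻¹ := by positivity
    have hb1 : (∫ x in Ioi ρ, v x ^ 2) ^ ((1:ℝ)/2) ≤ Real.sqrt ρ⁻¹ * A := by
      rw [← Real.sqrt_eq_rpow, hAdef, ← Real.sqrt_mul hρinv]
      exact Real.sqrt_le_sqrt (hw v hi_sq hi_w2)
    have hb2 : (∫ x in Ioi ρ, deriv v x ^ 2) ^ ((1:ℝ)/2) ≤ Real.sqrt ρ⁻¹ * B := by
      rw [← Real.sqrt_eq_rpow, hBdef, ← Real.sqrt_mul hρinv]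
      exact Real.sqrt_le_sqrt (hw (deriv v) hi_sq' hi_w2')
    have hnn1 : (0:ℝ) ≤ (∫ x in Ioi ρ, v x ^ 2) ^ ((1:ℝ)/2) :=
      Real.rpow_nonneg (setIntegral_nonneg measurableSet_Ioi (fun x _ => sq_nonneg _)) _
    have hnn2 : (0:ℝ) ≤ (∫ x in Ioi ρ, deriv v x ^ 2) ^ ((1:ℝ)/2) :=
      Real.rpow_nonneg (setIntegral_nonneg measurableSet_Ioi (fun x _ => sq_nonneg _)) _
    have hmul : (∫ x in Ioi ρ, v x ^ 2) ^ ((1:ℝ)/2) *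
        (∫ x in Ioi ρ, deriv v x ^ 2) ^ ((1:ℝ)/2) ≤
        (Real.sqrt ρ⁻¹ * A) * (Real.sqrt ρ⁻¹ * B) :=
      mul_le_mul hb1 hb2 hnn2 (by positivity)
    have hss : Real.sqrt ρ⁻¹ * Real.sqrt ρ⁻¹ = ρ⁻¹ := Real.mul_self_sqrt hρinv
    calc K = 2 * ∫ x in Ioi ρ, |v x| * |deriv v x| := hK2
      _ ≤ 2 * ((∫ x in Ioi ρ, v x ^ 2) ^ ((1:ℝ)/2) *
          (∫ x in Ioi ρ, deriv v x ^ 2) ^ ((1:ℝ)/2)) := by linarith [hCS2]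
      _ ≤ 2 * ((Real.sqrt ρ⁻¹ * A) * (Real.sqrt ρ⁻¹ * B)) := by linarith [hmul]
      _ = 2 * ρ⁻¹ * A * B := by rw [show (Real.sqrt ρ⁻¹ * A) * (Real.sqrt ρ⁻¹ * B)
            = (Real.sqrt ρ⁻¹ * Real.sqrt ρ⁻¹) * (A * B) by ring, hss]; ring
  -- Step 4 : conclude
  have hI2A : I2 = A ^ 2 := (Real.sq_sqrt hI2).symm
  have hfin : I4 ≤ (2/ρ) * (A ^ 3 * B) := by
    have h1 : K * I2 ≤ (2 * ρ⁻¹ * A * B) * A ^ 2 := by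
      rw [hI2A] at hstep2 ⊢
      exact mul_le_mul_of_nonneg_right hstep3 (sq_nonneg _)
    calc I4 ≤ K * I2 := hstep2
      _ ≤ (2 * ρ⁻¹ * A * B) * A ^ 2 := by rw [hI2A] at hstep2; exact h1
      _ = (2/ρ) * (A ^ 3 * B) := by rw [div_eq_mul_inv]; ring
  have hmono : I4 ^ ((1:ℝ)/4) ≤ ((2/ρ) * (A ^ 3 * B)) ^ ((1:ℝ)/4) :=
    Real.rpow_le_rpow hI4 hfin (by norm_num)
  have hsplit : ((2/ρ) * (A ^ 3 * B)) ^ ((1:ℝ)/4) =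
      (2/ρ) ^ ((1:ℝ)/4) * (A ^ ((3:ℝ)/4) * B ^ ((1:ℝ)/4)) := by
    rw [Real.mul_rpow (le_of_lt h2ρ) (by positivity),
      Real.mul_rpow (by positivity) hB]
    congr 2
    rw [← Real.rpow_natCast A 3, ← Real.rpow_mul hA]
    norm_num
  have hAB : (0:ℝ) ≤ A ^ ((3:ℝ)/4) * B ^ ((1:ℝ)/4) := by positivity
  have hCpos : (0:ℝ) < (2/ρ) ^ ((1:ℝ)/4) := Real.rpow_pos_of_pos h2ρ _
  calc I4 ^ ((1:ℝ)/4) ≤ (2/ρ) ^ ((1:ℝ)/4) * (A ^ ((3:ℝ)/4) * B ^ ((1:ℝ)/4)) := by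
        rw [← hsplit]; exact hmono
    _ ≤ (2/ρ) ^ ((1:ℝ)/4) * (A + A ^ ((3:ℝ)/4) * B ^ ((1:ℝ)/4)) := by
        nlinarith [mul_nonneg (le_of_lt hCpos) hA]
end

section
/- Let $\rho>0$ and $\Omega_h = \{x_h\in\mathbb{R}^2: |x_h|>\rho\}$. There is a constant $C = C(\rho) > 0$ such that for all axisymmetric $u,v \in C_c^\infty(\Omega_h)$ (i.e., $u(x_h) = \tilde u(|x_h|)$, $v(x_h) = \tilde v(|x_h|)$ for functions $\tilde u,\tilde v$ on $(\rho,\infty)$), one has $\|uv\|_{L^2(\Omega_h)} \le C\,\|v\|_{L^2(\Omega_h)}\big(\|u\|_{L^2(\Omega_h)} + \|\nabla u\|_{L^2(\Omega_h)}\big)$. -/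
open MeasureTheory Set

set_option maxHeartbeats 1000000


lemma aux_radial_fderiv {u : EuclideanSpace ℝ (Fin 2) → ℝ}
    {u0 : ℝ → ℝ} (hu0 : ∀ x, u x = u0 ‖x‖) {a b : EuclideanSpace ℝ (Fin 2)}
    (hab : ‖a‖ = ‖b‖) : ‖fderiv ℝ u a‖ = ‖fderiv ℝ u b‖ := by
  set f := Submodule.reflection (ℝ ∙ (a - b))ᗮ with hfdef
  have hfa : f a = b := Submodule.reflection_sub hab
  have hcomp : u ∘ f.toContinuousLinearEquiv = u := by
    funext y
    simp only [Function.comp_apply, LinearIsometryEquiv.coe_toContinuousLinearEquiv]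
    rw [hu0, hu0, f.norm_map]
  have h2 : fderiv ℝ u a = (fderiv ℝ u b).comp f.toLinearIsometry.toContinuousLinearMap := by
    conv_lhs => rw [← hcomp]
    rw [f.toContinuousLinearEquiv.comp_right_fderiv]
    congr 1
    rw [LinearIsometryEquiv.coe_toContinuousLinearEquiv, hfa]
  rw [h2]
  exact ContinuousLinearMap.opNorm_comp_linearIsometryEquiv _ f

lemma aux_polar (w : ℝ → ℝ) :
    ∫ x : EuclideanSpace ℝ (Fin 2), w ‖x‖ =
      (2 * (volume (Metric.ball (0 : EuclideanSpace ℝ (Fin 2)) 1)).toReal) *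
        ∫ y in Ioi (0:ℝ), y * w y := by
  rw [integral_fun_norm_addHaar volume w]
  have h : Module.finrank ℝ (EuclideanSpace ℝ (Fin 2)) = 2 := by simp
  rw [h]
  have h2 : ∀ y : ℝ, y ^ (1:ℕ) * w y = y * w y := fun y => by rw [pow_one]
  simp only [nsmul_eq_mul, smul_eq_mul, Nat.cast_ofNat, pow_one, h2]
  rw [measureReal_def]
  ring

lemma aux_weight {ρ : ℝ} (hρ : 0 < ρ) (F : ℝ → ℝ) (hc : Continuous F)
    (hs : HasCompactSupport F) :
    ∫ t in Ioi ρ, F t ^ 2 ≤ (1/ρ) * ∫ t in Ioi (0:ℝ), t * F t ^ 2 := by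
  have hsq : HasCompactSupport (fun t => F t ^ 2) := by
    have := hs.mul_left (f := F)
    simpa [Pi.mul_def, sq] using this
  have hint : Integrable (fun t => t * F t ^ 2) volume := by
    apply Continuous.integrable_of_hasCompactSupport (by continuity)
    exact hsq.mul_left
  have hint2 : Integrable (fun t => F t ^ 2) volume :=
    Continuous.integrable_of_hasCompactSupport (by continuity) hsq
  calc ∫ t in Ioi ρ, F t ^ 2 ≤ ∫ t in Ioi ρ, (1/ρ) * (t * F t ^ 2) := by
        apply setIntegral_mono_on hint2.integrableOn
          (hint.integrableOn.const_mul _) measurableSet_Ioi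
        intro t ht
        have h1 : 0 ≤ F t ^ 2 := sq_nonneg _
        have h2 : ρ < t := ht
        rw [div_mul_eq_mul_div, one_mul, le_div_iff₀ hρ]
        nlinarith
    _ = (1/ρ) * ∫ t in Ioi ρ, t * F t ^ 2 := integral_const_mul _ _
    _ ≤ (1/ρ) * ∫ t in Ioi (0:ℝ), t * F t ^ 2 := by
        apply mul_le_mul_of_nonneg_left _ (by positivity)
        apply setIntegral_mono_set hint.integrableOn
        · filter_upwards [ae_restrict_mem measurableSet_Ioi] with t ht
          have : (0:ℝ) < t := ht
          positivity
        · exact HasSubset.Subset.eventuallyLE (Ioi_subset_Ioi hρ.le)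

lemma aux_sup (ρ : ℝ) (hρ : 0 < ρ) (u : EuclideanSpace ℝ (Fin 2) → ℝ)
    (hu : ContDiff ℝ (⊤ : ℕ∞) u) (hcu : HasCompactSupport u)
    (hsupp : Function.support u ⊆ {x : EuclideanSpace ℝ (Fin 2) | ρ < ‖x‖})
    (u0 : ℝ → ℝ) (hu0 : ∀ x, u x = u0 ‖x‖)
    (x : EuclideanSpace ℝ (Fin 2)) :
    u x ^ 2 ≤ (1 / ((volume (Metric.ball (0 : EuclideanSpace ℝ (Fin 2)) 1)).toReal * ρ)) *
      (Real.sqrt (∫ y, u y ^ 2) * Real.sqrt (∫ y, ‖fderiv ℝ u y‖ ^ 2)) := by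
  set c := (volume (Metric.ball (0 : EuclideanSpace ℝ (Fin 2)) 1)).toReal with hc
  have hc0 : 0 < c := by
    rw [hc]
    refine ENNReal.toReal_pos (ne_of_gt (Metric.measure_ball_pos _ _ one_pos)) (measure_ball_lt_top).ne
  have hqu : (0:ℝ) ≤ ∫ y, u y ^ 2 := integral_nonneg fun y => sq_nonneg _
  have hqd : (0:ℝ) ≤ ∫ y, ‖fderiv ℝ u y‖ ^ 2 := integral_nonneg fun y => sq_nonneg _
  by_cases hx : u x = 0
  · rw [hx]
    have h1 : (0:ℝ) ≤ Real.sqrt (∫ y, u y ^ 2) * Real.sqrt (∫ y, ‖fderiv ℝ u y‖ ^ 2) := by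
      positivity
    have h2 : (0:ℝ) ≤ 1 / (c * ρ) := by positivity
    simpa using mul_nonneg h2 h1
  -- setup
  have hr : ρ < ‖x‖ := hsupp hx
  have hr0 : 0 < ‖x‖ := hρ.trans hr
  set r := ‖x‖ with hrdef
  set e := r⁻¹ • x with hedef
  have he : ‖e‖ = 1 := by
    rw [hedef, norm_smul, norm_inv, Real.norm_eq_abs, abs_of_nonneg hr0.le, ← hrdef,
      inv_mul_cancel₀ hr0.ne']
  have hte : ∀ t : ℝ, ‖t • e‖ = |t| := fun t => by
    rw [norm_smul, he, Real.norm_eq_abs, mul_one]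
  set g := fun t : ℝ => u (t • e) with hgdef
  set G := fun t : ℝ => ‖fderiv ℝ u (t • e)‖ with hGdef
  have hsmul : Continuous (fun t : ℝ => t • e) := continuous_id.smul continuous_const
  have hgc : Continuous g := hu.continuous.comp hsmul
  have hfc : Continuous (fderiv ℝ u) := hu.continuous_fderiv (by simp)
  have hGc : Continuous G := (hfc.comp hsmul).norm
  -- radius
  obtain ⟨R, hRc⟩ := (hcu.union (hcu.fderiv (𝕜 := ℝ))).isBounded.subset_closedBall 0
  have hR : ∀ y : EuclideanSpace ℝ (Fin 2), R < ‖y‖ → u y = 0 ∧ fderiv ℝ u y = 0 := by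
    intro y hy
    have hnm : y ∉ tsupport u ∪ tsupport (fderiv ℝ u) := by
      intro hmem
      have := hRc hmem
      simp only [Metric.mem_closedBall, dist_zero_right] at this
      linarith
    exact ⟨image_eq_zero_of_notMem_tsupport fun h => hnm (Or.inl h),
      image_eq_zero_of_notMem_tsupport fun h => hnm (Or.inr h)⟩
  set T := max (R + 1) (r + 1) with hTdef
  have hrT : r < T := lt_of_lt_of_le (lt_add_one r) (le_max_right _ _)
  have hT0 : 0 < T := hr0.trans hrT
  have hgz : ∀ t : ℝ, R < |t| → g t = 0 := fun t ht =>
    (hR _ (by rw [hte]; exact ht)).1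
  have hGz : ∀ t : ℝ, R < |t| → G t = 0 := fun t ht => by
    rw [hGdef]; simp [(hR _ (by rw [hte]; exact ht)).2]
  have hgs : HasCompactSupport g := by
    apply HasCompactSupport.intro (isCompact_Icc (a := -T) (b := T))
    intro t ht
    simp only [mem_Icc, not_and_or, not_le] at ht
    apply hgz
    rcases ht with h | h
    · rw [abs_of_nonpos (by linarith : t ≤ 0)]
      have : R + 1 ≤ T := le_max_left _ _
      linarith
    · rw [abs_of_nonneg (by linarith : 0 ≤ t)]
      have : R + 1 ≤ T := le_max_left _ _
      linarith
  have hGs : HasCompactSupport G := by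
    apply HasCompactSupport.intro (isCompact_Icc (a := -T) (b := T))
    intro t ht
    simp only [mem_Icc, not_and_or, not_le] at ht
    apply hGz
    rcases ht with h | h
    · rw [abs_of_nonpos (by linarith : t ≤ 0)]
      have : R + 1 ≤ T := le_max_left _ _
      linarith
    · rw [abs_of_nonneg (by linarith : 0 ≤ t)]
      have : R + 1 ≤ T := le_max_left _ _
      linarith
  have hgT : g T = 0 := by
    apply hgz
    rw [abs_of_nonneg hT0.le]
    have : R + 1 ≤ T := le_max_left _ _
    linarith
  -- derivative
  have hderiv : ∀ t : ℝ, HasDerivAt g (fderiv ℝ u (t • e) e) t := by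
    intro t
    have hd : HasDerivAt (fun s : ℝ => s • e) e t := by
      simpa using (hasDerivAt_id t).smul_const e
    exact ((hu.differentiable (by simp)).differentiableAt.hasFDerivAt).comp_hasDerivAt t hd
  set φ := fun t : ℝ => 2 * g t * fderiv ℝ u (t • e) e with hφdef
  have hφc : Continuous φ := by
    apply Continuous.mul (continuous_const.mul hgc)
    exact (ContinuousLinearMap.apply ℝ ℝ e).continuous.comp (hfc.comp hsmul)
  have hderiv2 : ∀ t : ℝ, HasDerivAt (fun s => g s ^ 2) (φ t) t := by
    intro t
    have := (hderiv t).pow 2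
    simpa [hφdef, Pi.pow_def, mul_comm, mul_assoc, mul_left_comm] using this
  have hftc : ∫ t in r..T, φ t = g T ^ 2 - g r ^ 2 :=
    intervalIntegral.integral_eq_sub_of_hasDerivAt (fun t _ => hderiv2 t)
      (hφc.intervalIntegrable _ _)
  have key1 : g r ^ 2 = ∫ t in r..T, -φ t := by
    rw [intervalIntegral.integral_neg, hftc, hgT]; ring
  have hGge : ∀ t : ℝ, -φ t ≤ 2 * |g t| * G t := by
    intro t
    have h1 : |fderiv ℝ u (t • e) e| ≤ G t := by
      have := (fderiv ℝ u (t • e)).le_opNorm e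
      rw [he, mul_one] at this
      simpa [Real.norm_eq_abs] using this
    have h2 : |φ t| ≤ 2 * |g t| * G t := by
      rw [hφdef]
      simp only
      rw [abs_mul, abs_mul, abs_two]
      have : 0 ≤ 2 * |g t| := by positivity
      exact mul_le_mul_of_nonneg_left h1 this
    linarith [neg_abs_le (φ t)]
  have key2 : g r ^ 2 ≤ ∫ t in r..T, 2 * |g t| * G t := by
    rw [key1]
    apply intervalIntegral.integral_mono_on hrT.le
      ((hφc.neg).intervalIntegrable _ _)
      (((continuous_const.mul hgc.abs).mul hGc).intervalIntegrable _ _)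
    exact fun t _ => hGge t
  -- move to set integral over Ioi ρ
  have hintgG : Integrable (fun t => |g t| * G t) volume :=
    Continuous.integrable_of_hasCompactSupport (hgc.abs.mul hGc) hGs.mul_left
  have key3 : g r ^ 2 ≤ 2 * ∫ t in Ioi ρ, |g t| * G t := by
    rw [intervalIntegral.integral_of_le hrT.le] at key2
    calc g r ^ 2 ≤ ∫ t in Ioc r T, 2 * |g t| * G t := key2
      _ = 2 * ∫ t in Ioc r T, |g t| * G t := by
          simp only [mul_assoc]; exact integral_const_mul 2 _
      _ ≤ 2 * ∫ t in Ioi ρ, |g t| * G t := by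
          apply mul_le_mul_of_nonneg_left _ (by norm_num)
          apply setIntegral_mono_set hintgG.integrableOn
          · filter_upwards with t
            positivity
          · apply HasSubset.Subset.eventuallyLE
            intro t ht
            exact hr.trans ht.1
  -- Hölder
  have conj : Real.HolderConjugate 2 2 := Real.HolderConjugate.two_two
  have hgm : MemLp (fun t => |g t|) (ENNReal.ofReal 2) (volume.restrict (Ioi ρ)) :=
    (hgc.abs.memLp_of_hasCompactSupport hgs.abs).restrict _
  have hGm : MemLp G (ENNReal.ofReal 2) (volume.restrict (Ioi ρ)) :=
    (hGc.memLp_of_hasCompactSupport hGs).restrict _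
  have holder := integral_mul_le_Lp_mul_Lq_of_nonneg conj
    (Filter.Eventually.of_forall (fun t => abs_nonneg (g t)))
    (Filter.Eventually.of_forall (fun t => norm_nonneg _)) hgm hGm
  have hconv : ∀ y : ℝ, y ^ (2:ℝ) = y ^ (2:ℕ) := fun y => by
    rw [← Real.rpow_natCast y 2]; norm_num
  simp only [hconv] at holder
  -- weight bounds
  have hwg := aux_weight hρ g hgc hgs
  have hwG := aux_weight hρ G hGc hGs
  -- polar identities
  have hqu_eq : ∫ y, u y ^ 2 = (2 * c) * ∫ t in Ioi (0:ℝ), t * u0 t ^ 2 := by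
    have h1 : (fun y : EuclideanSpace ℝ (Fin 2) => u y ^ 2) =
        fun y => (fun s => u0 s ^ 2) ‖y‖ := by
      funext y; rw [hu0]
    rw [h1, hc]
    exact aux_polar (fun s => u0 s ^ 2)
  have hg_u0 : ∫ t in Ioi (0:ℝ), t * g t ^ 2 = ∫ t in Ioi (0:ℝ), t * u0 t ^ 2 := by
    apply setIntegral_congr_fun measurableSet_Ioi
    intro t ht
    have hgt : g t = u0 t := by
      rw [hgdef]
      simp only
      rw [hu0, hte, abs_of_nonneg (le_of_lt ht)]
    show t * g t ^ 2 = t * u0 t ^ 2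
    rw [hgt]
  have hGy : ∀ y : EuclideanSpace ℝ (Fin 2), ‖fderiv ℝ u y‖ = G ‖y‖ := by
    intro y
    apply aux_radial_fderiv hu0
    rw [hte, abs_of_nonneg (norm_nonneg y)]
  have hqd_eq : ∫ y, ‖fderiv ℝ u y‖ ^ 2 = (2 * c) * ∫ t in Ioi (0:ℝ), t * G t ^ 2 := by
    have h1 : (fun y : EuclideanSpace ℝ (Fin 2) => ‖fderiv ℝ u y‖ ^ 2) =
        fun y => (fun s => G s ^ 2) ‖y‖ := by
      funext y; rw [hGy]
    rw [h1, hc]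
    exact aux_polar (fun s => G s ^ 2)
  set qu := ∫ y, u y ^ 2 with hqu_def
  set qd := ∫ y, ‖fderiv ℝ u y‖ ^ 2 with hqd_def
  -- bounds on 1D integrals
  have hc2 : (2:ℝ) * c ≠ 0 := by positivity
  have hIu : ∫ t in Ioi (0:ℝ), t * u0 t ^ 2 = qu / (2 * c) := by
    rw [hqu_eq, mul_div_cancel_left₀ _ hc2]
  have hIG : ∫ t in Ioi (0:ℝ), t * G t ^ 2 = qd / (2 * c) := by
    rw [hqd_eq, mul_div_cancel_left₀ _ hc2]
  have hA : ∫ t in Ioi ρ, |g t| ^ 2 ≤ qu * (1 / (2 * c * ρ)) := by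
    have e1 : ∫ t in Ioi ρ, |g t| ^ 2 = ∫ t in Ioi ρ, g t ^ 2 := by
      simp only [sq_abs]
    rw [e1]
    refine hwg.trans (le_of_eq ?_)
    rw [hg_u0, hIu]
    simp only [one_div, div_eq_mul_inv, mul_inv]
    ring
  have hB : ∫ t in Ioi ρ, G t ^ 2 ≤ qd * (1 / (2 * c * ρ)) := by
    refine hwG.trans (le_of_eq ?_)
    rw [hIG]
    simp only [one_div, div_eq_mul_inv, mul_inv]
    ring
  -- combine
  have hAnn : (0:ℝ) ≤ ∫ t in Ioi ρ, |g t| ^ 2 :=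
    integral_nonneg fun t => by positivity
  have hBnn : (0:ℝ) ≤ ∫ t in Ioi ρ, G t ^ 2 :=
    integral_nonneg fun t => by positivity
  set k := 1 / (2 * c * ρ) with hk_def
  have hknn : (0:ℝ) ≤ k := by positivity
  have hsA : (∫ t in Ioi ρ, |g t| ^ 2) ^ ((1:ℝ)/2) ≤ Real.sqrt (qu * k) := by
    rw [← Real.sqrt_eq_rpow]
    exact Real.sqrt_le_sqrt hA
  have hsB : (∫ t in Ioi ρ, G t ^ 2) ^ ((1:ℝ)/2) ≤ Real.sqrt (qd * k) := by
    rw [← Real.sqrt_eq_rpow]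
    exact Real.sqrt_le_sqrt hB
  have hgr : g r = u x := by
    rw [hgdef]
    simp only
    rw [hedef, smul_smul, mul_inv_cancel₀ hr0.ne', one_smul]
  have final : u x ^ 2 ≤ 2 * (Real.sqrt (qu * k) * Real.sqrt (qd * k)) := by
    rw [← hgr]
    calc g r ^ 2 ≤ 2 * ∫ t in Ioi ρ, |g t| * G t := key3
      _ ≤ 2 * ((∫ t in Ioi ρ, |g t| ^ 2) ^ ((1:ℝ)/2) *
            (∫ t in Ioi ρ, G t ^ 2) ^ ((1:ℝ)/2)) :=
          mul_le_mul_of_nonneg_left holder (by norm_num)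
      _ ≤ 2 * (Real.sqrt (qu * k) * Real.sqrt (qd * k)) := by
          apply mul_le_mul_of_nonneg_left _ (by norm_num)
          apply mul_le_mul hsA hsB (by positivity) (Real.sqrt_nonneg _)
  calc u x ^ 2 ≤ 2 * (Real.sqrt (qu * k) * Real.sqrt (qd * k)) := final
    _ = 2 * k * (Real.sqrt qu * Real.sqrt qd) := by
        rw [Real.sqrt_mul hqu, Real.sqrt_mul hqd]
        rw [show Real.sqrt qu * Real.sqrt k * (Real.sqrt qd * Real.sqrt k)
          = (Real.sqrt k * Real.sqrt k) * (Real.sqrt qu * Real.sqrt qd) by ring]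
        rw [Real.mul_self_sqrt hknn]
        ring
    _ = (1 / (c * ρ)) * (Real.sqrt qu * Real.sqrt qd) := by
        rw [hk_def]
        congr 1
        field_simp

/-- product law for axisymmetric (radial) functions on the exterior
of a disk of radius `ρ` in `ℝ²`:
`‖uv‖_{L²} ≤ C ‖v‖_{L²} (‖u‖_{L²} + ‖∇u‖_{L²})`. -/
theorem stmt_19 (ρ : ℝ) (hρ : 0 < ρ) :
    ∃ C > 0, ∀ u v : EuclideanSpace ℝ (Fin 2) → ℝ,
      ContDiff ℝ (⊤ : ℕ∞) u → HasCompactSupport u →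
      Function.support u ⊆ {x : EuclideanSpace ℝ (Fin 2) | ρ < ‖x‖} →
      ContDiff ℝ (⊤ : ℕ∞) v → HasCompactSupport v →
      Function.support v ⊆ {x : EuclideanSpace ℝ (Fin 2) | ρ < ‖x‖} →
      (∃ u0 : ℝ → ℝ, ∀ x, u x = u0 ‖x‖) →
      (∃ v0 : ℝ → ℝ, ∀ x, v x = v0 ‖x‖) →
      eLpNorm (fun x => u x * v x) 2 volume ≤
        ENNReal.ofReal C * eLpNorm v 2 volume *
          (eLpNorm u 2 volume + eLpNorm (fun x => ‖fderiv ℝ u x‖) 2 volume) := by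
  set c := (volume (Metric.ball (0 : EuclideanSpace ℝ (Fin 2)) 1)).toReal with hc
  have hc0 : 0 < c := by
    rw [hc]
    exact ENNReal.toReal_pos (ne_of_gt (Metric.measure_ball_pos _ _ one_pos))
      measure_ball_lt_top.ne
  set C0 : ℝ := Real.sqrt (1 / (c * ρ)) with hC0
  have hC00 : 0 < C0 := Real.sqrt_pos.mpr (by positivity)
  refine ⟨C0, hC00, ?_⟩
  rintro u v hu hcu hsu hv hcv hsv ⟨u0, hu0⟩ ⟨v0, hv0⟩
  set qu := ∫ y, u y ^ 2 with hqu_def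
  set qd := ∫ y, ‖fderiv ℝ u y‖ ^ 2 with hqd_def
  have hqu : (0:ℝ) ≤ qu := integral_nonneg fun y => sq_nonneg _
  have hqd : (0:ℝ) ≤ qd := integral_nonneg fun y => sq_nonneg _
  set M : ℝ := C0 * Real.sqrt (Real.sqrt qu * Real.sqrt qd) with hM
  have hM0 : (0:ℝ) ≤ M := by positivity
  -- pointwise bound
  have hpt : ∀ x, |u x| ≤ M := by
    intro x
    have h1 := aux_sup ρ hρ u hu hcu hsu u0 hu0 x
    rw [← hc, ← hqu_def, ← hqd_def] at h1
    have h2 : |u x| = Real.sqrt (u x ^ 2) := (Real.sqrt_sq_eq_abs _).symm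
    rw [h2, hM, hC0]
    calc Real.sqrt (u x ^ 2)
        ≤ Real.sqrt ((1 / (c * ρ)) * (Real.sqrt qu * Real.sqrt qd)) := Real.sqrt_le_sqrt h1
      _ = Real.sqrt (1 / (c * ρ)) * Real.sqrt (Real.sqrt qu * Real.sqrt qd) :=
          Real.sqrt_mul (by positivity) _
  -- step 1 : product ≤ M * v in L2
  have step1 : eLpNorm (fun x => u x * v x) 2 volume ≤
      ENNReal.ofReal M * eLpNorm v 2 volume := by
    have h1 : eLpNorm (fun x => u x * v x) 2 volume ≤ eLpNorm (M • v) 2 volume := by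
      apply eLpNorm_mono
      intro x
      simp only [Pi.smul_apply, smul_eq_mul, Real.norm_eq_abs, abs_mul, abs_of_nonneg hM0]
      exact mul_le_mul_of_nonneg_right (hpt x) (abs_nonneg _)
    rw [eLpNorm_const_smul] at h1
    refine h1.trans (le_of_eq ?_)
    congr 1
    rw [ENNReal.ofReal]
    congr 1
    exact Real.enorm_of_nonneg hM0
  -- identities for eLpNorms
  have hmu : MemLp u 2 volume := hu.continuous.memLp_of_hasCompactSupport hcu
  have hmd : MemLp (fun x => ‖fderiv ℝ u x‖) 2 volume :=
    ((hu.continuous_fderiv (by simp)).norm).memLp_of_hasCompactSupport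
      (hcu.fderiv (𝕜 := ℝ)).norm
  have htR : ((2:ENNReal)).toReal = (2:ℝ) := by norm_num
  have hrp : ∀ y : ℝ, |y| ^ (2:ℝ) = y ^ (2:ℕ) := fun y => by
    rw [show ((2:ℝ)) = ((2:ℕ):ℝ) by norm_num, Real.rpow_natCast, sq_abs]
  have heu : eLpNorm u 2 volume = ENNReal.ofReal (Real.sqrt qu) := by
    rw [hmu.eLpNorm_eq_integral_rpow_norm two_ne_zero ENNReal.ofNat_ne_top]
    congr 1
    rw [htR]
    simp only [Real.norm_eq_abs, hrp]
    rw [← hqu_def, Real.sqrt_eq_rpow, one_div]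
  have hed : eLpNorm (fun x => ‖fderiv ℝ u x‖) 2 volume = ENNReal.ofReal (Real.sqrt qd) := by
    rw [hmd.eLpNorm_eq_integral_rpow_norm two_ne_zero ENNReal.ofNat_ne_top]
    congr 1
    rw [htR]
    simp only [Real.norm_eq_abs, hrp]
    rw [← hqd_def, Real.sqrt_eq_rpow, one_div]
  -- M ≤ C0 * (√qu + √qd)
  have hMle : M ≤ C0 * (Real.sqrt qu + Real.sqrt qd) := by
    rw [hM]
    apply mul_le_mul_of_nonneg_left _ hC00.le
    set a := Real.sqrt qu
    set b := Real.sqrt qd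
    have ha : 0 ≤ a := Real.sqrt_nonneg _
    have hb : 0 ≤ b := Real.sqrt_nonneg _
    calc Real.sqrt (a * b) ≤ Real.sqrt ((a + b) ^ 2) := by
          apply Real.sqrt_le_sqrt
          nlinarith [sq_nonneg (a - b), mul_nonneg ha hb]
      _ = a + b := Real.sqrt_sq (by positivity)
  -- conclude
  calc eLpNorm (fun x => u x * v x) 2 volume
      ≤ ENNReal.ofReal M * eLpNorm v 2 volume := step1
    _ ≤ ENNReal.ofReal (C0 * (Real.sqrt qu + Real.sqrt qd)) * eLpNorm v 2 volume :=
        mul_le_mul_left (ENNReal.ofReal_le_ofReal hMle) _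
    _ = ENNReal.ofReal C0 * eLpNorm v 2 volume *
          (eLpNorm u 2 volume + eLpNorm (fun x => ‖fderiv ℝ u x‖) 2 volume) := by
        rw [heu, hed, ENNReal.ofReal_mul hC00.le,
          ENNReal.ofReal_add (Real.sqrt_nonneg _) (Real.sqrt_nonneg _)]
        ring
end
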